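/- arXiv:1607.01821 — 2 statements merged into one kernel-verified Lean document; each statement's English description precedes it below -/
import Mathlib

section
/- Let G be a connected finite simple undirected graph on vertex set V, let S ⊆ V be a nonempty set of grounded nodes with complement F = V \ S nonempty, let L_g be the grounded Laplacian with smallest eigenvalue λ_1(L_g) > 0, and let γ > 0 be a real number. Then: (i) (necessity) if 1/λ_1(L_g) < γ then max_{i∈F} β_i > ⌊1/γ⌋; and (ii) (sufficiency) if min_{i∈F} β_i > ⌈1/γ⌉ then 1/λ_1(L_g) < γ. (Here 1/λ_1(L_g) is the H∞ norm of the velocity tracking error dynamics.) -/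
/-!
Both parts follow from `min_{i∈F} β_i ≤ λ₁(L_g) ≤ max_{i∈F} β_i`, where `β_i` is the `i`-th row
sum of `L_g`. The upper bound is the Rayleigh quotient of the all-ones vector, which is the average
row sum. For the lower bound, the off-diagonal entries of `L_g` are nonpositive, so every
Gershgorin disc of `L_g` has its left end at a row sum.
-/

open scoped Matrix
open Finset Matrix Module.End

/-- The grounded Laplacian: the principal submatrix of the Laplacian of `G`
obtained by deleting the rows and columns indexed by the grounded set `S`. -/
noncomputable def groundedLaplacian {V : Type*} [Fintype V] [DecidableEq V]
    (G : SimpleGraph V) [DecidableRel G.Adj] (S : Finset V) :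
    Matrix {v : V // v ∉ S} {v : V // v ∉ S} ℝ :=
  (G.lapMatrix ℝ).submatrix (fun i => (i : V)) (fun j => (j : V))

namespace Matrix

variable {n : Type*} [Fintype n]

theorem dotProduct_mulVec_conj (U B : Matrix n n ℝ) (z : n → ℝ) :
    z ⬝ᵥ ((U * B * Uᵀ) *ᵥ z) = (Uᵀ *ᵥ z) ⬝ᵥ (B *ᵥ (Uᵀ *ᵥ z)) := by
  rw [← mulVec_mulVec, ← mulVec_mulVec, dotProduct_mulVec, mulVec_transpose]

variable [DecidableEq n]

/-- Gershgorin: with nonpositive off-diagonal entries the `k`-th disc has radius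
`-∑_{j ≠ k} A k j`, so its left end is the `k`-th row sum. -/
theorem exists_sum_row_le_of_hasEigenvalue {A : Matrix n n ℝ} (hA : ∀ i j, i ≠ j → A i j ≤ 0)
    {μ : ℝ} (hμ : HasEigenvalue (toLin' A) μ) : ∃ k, ∑ j, A k j ≤ μ := by
  obtain ⟨k, hk⟩ := eigenvalue_mem_ball hμ
  refine ⟨k, ?_⟩
  have hnorm : ∑ j ∈ univ.erase k, ‖A k j‖ = -∑ j ∈ univ.erase k, A k j := by
    rw [← sum_neg_distrib]
    exact sum_congr rfl fun j hj => abs_of_nonpos (hA k j (ne_of_mem_erase hj).symm)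
  rw [Metric.mem_closedBall, hnorm, Real.dist_eq] at hk
  rw [← add_sum_erase _ _ (mem_univ k)]
  linarith [neg_abs_le (μ - A k k)]

theorem IsHermitian.hasEigenvalue_eigenvalues {A : Matrix n n ℝ} (hA : A.IsHermitian) (j : n) :
    HasEigenvalue (toLin' A) (hA.eigenvalues j) := by
  rw [hasEigenvalue_iff_mem_spectrum, spectrum_toLin']
  exact hA.eigenvalues_mem_spectrum_real j

theorem IsHermitian.iInf_eigenvalues_mul_dotProduct_self_le [Nonempty n] {A : Matrix n n ℝ}
    (hA : A.IsHermitian) (z : n → ℝ) :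
    (⨅ j, hA.eigenvalues j) * (z ⬝ᵥ z) ≤ z ⬝ᵥ (A *ᵥ z) := by
  set U : Matrix n n ℝ := (hA.eigenvectorUnitary : Matrix n n ℝ)
  have hUt : star U = Uᵀ := conjTranspose_eq_transpose_of_trivial U
  have hA' : A = U * diagonal hA.eigenvalues * Uᵀ := by
    conv_lhs => rw [hA.spectral_theorem, Unitary.conjStarAlgAut_apply]
    rw [← hUt]; rfl
  have hone : (1 : Matrix n n ℝ) = U * 1 * Uᵀ := by
    rw [mul_one, ← hUt, mem_unitaryGroup_iff.mp hA.eigenvectorUnitary.2]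
  have hz : z ⬝ᵥ z = (Uᵀ *ᵥ z) ⬝ᵥ (Uᵀ *ᵥ z) := by
    have := dotProduct_mulVec_conj U 1 z
    rwa [← hone, one_mulVec, one_mulVec] at this
  conv_rhs => rw [hA', dotProduct_mulVec_conj]
  rw [hz]
  simp only [dotProduct, mulVec_diagonal, mul_sum]
  refine sum_le_sum fun j _ => ?_
  have hmin : (⨅ j, hA.eigenvalues j) ≤ hA.eigenvalues j := ciInf_le (Finite.bddBelow_range _) j
  nlinarith [mul_self_nonneg ((Uᵀ *ᵥ z) j)]

theorem IsHermitian.iInf_eigenvalues_le_of_sum_row_le [Nonempty n] {A : Matrix n n ℝ}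
    (hA : A.IsHermitian) {c : ℝ} (hc : ∀ i, ∑ j, A i j ≤ c) : (⨅ j, hA.eigenvalues j) ≤ c := by
  have hcard : (0 : ℝ) < Fintype.card n := by exact_mod_cast Fintype.card_pos
  have hray := hA.iInf_eigenvalues_mul_dotProduct_self_le (fun _ => 1)
  have hsum : ∑ i, ∑ j, A i j ≤ ∑ _i : n, c := sum_le_sum fun i _ => hc i
  simp only [dotProduct, mulVec, mul_one, one_mul, sum_const, card_univ, nsmul_eq_mul] at hray hsum
  nlinarith

theorem IsHermitian.le_iInf_eigenvalues_of_le_sum_row [Nonempty n] {A : Matrix n n ℝ}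
    (hA : A.IsHermitian) (hoff : ∀ i j, i ≠ j → A i j ≤ 0) {c : ℝ} (hc : ∀ i, c ≤ ∑ j, A i j) :
    c ≤ ⨅ j, hA.eigenvalues j :=
  le_ciInf fun j =>
    let ⟨k, hk⟩ := exists_sum_row_le_of_hasEigenvalue hoff (hA.hasEigenvalue_eigenvalues j)
    (hc k).trans hk

end Matrix

section GroundedLaplacian

variable {V : Type*} [Fintype V] [DecidableEq V] (G : SimpleGraph V) [DecidableRel G.Adj]

theorem SimpleGraph.lapMatrix_apply_of_ne {R : Type*} [AddGroupWithOne R] {i j : V} (h : i ≠ j) :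
    G.lapMatrix R i j = -if G.Adj i j then 1 else 0 := by
  simp [SimpleGraph.lapMatrix, SimpleGraph.degMatrix, diagonal_apply_ne _ h,
    SimpleGraph.adjMatrix_apply]

variable (S : Finset V)

theorem groundedLaplacian_nonpos_of_ne {i j : {v : V // v ∉ S}} (h : i ≠ j) :
    groundedLaplacian G S i j ≤ 0 := by
  rw [groundedLaplacian, submatrix_apply, G.lapMatrix_apply_of_ne (Subtype.coe_ne_coe.mpr h)]
  split_ifs <;> norm_num

/-- The row sums of the Laplacian vanish, so a row of `L_g` sums to minus the deleted entries. -/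
theorem sum_groundedLaplacian_row (i : {v : V // v ∉ S}) :
    ∑ j, groundedLaplacian G S i j = (G.neighborFinset i ∩ S).card := by
  have hzero : ∑ u, G.lapMatrix ℝ i u = 0 := by
    simpa [mulVec, dotProduct] using congrFun (G.lapMatrix_mulVec_const_eq_zero (R := ℝ)) (i : V)
  have hS : ∑ u ∈ S, G.lapMatrix ℝ i u = -(G.neighborFinset i ∩ S).card := by
    rw [sum_congr rfl fun u hu => G.lapMatrix_apply_of_ne fun h : (i : V) = u => i.2 (h ▸ hu),
      sum_neg_distrib, sum_boole]
    congr 3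
    ext u
    simp [and_comm]
  have hF : ∑ j, groundedLaplacian G S i j = ∑ u ∈ Sᶜ, G.lapMatrix ℝ i u :=
    (sum_subtype Sᶜ (fun _ => mem_compl) (G.lapMatrix ℝ i)).symm
  rw [hF]
  linarith [sum_add_sum_compl S (G.lapMatrix ℝ i)]

end GroundedLaplacian

theorem hinf_norm_velocity_tracking_conditions_general {V : Type*} [Fintype V] [DecidableEq V]
    (G : SimpleGraph V) [DecidableRel G.Adj]
    (S : Finset V) (hF : Sᶜ.Nonempty)
    (hsym : (groundedLaplacian G S).IsHermitian)
    (hpos : 0 < ⨅ j, hsym.eigenvalues j) (γ : ℝ) (hγ : 0 < γ) :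
    (1 / (⨅ j, hsym.eigenvalues j) < γ →
      Sᶜ.sup' hF (fun i => (G.neighborFinset i ∩ S).card) > ⌊1/γ⌋₊) ∧
    (Sᶜ.inf' hF (fun i => (G.neighborFinset i ∩ S).card) > ⌈1/γ⌉₊ →
      1 / (⨅ j, hsym.eigenvalues j) < γ) := by
  have : Nonempty {v : V // v ∉ S} := let ⟨v, hv⟩ := hF; ⟨⟨v, mem_compl.mp hv⟩⟩
  set β := fun i => (G.neighborFinset i ∩ S).card
  set lam := ⨅ j, hsym.eigenvalues j
  have hup : lam ≤ ((Sᶜ.sup' hF β : ℕ) : ℝ) := hsym.iInf_eigenvalues_le_of_sum_row_le fun i => by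
    rw [sum_groundedLaplacian_row]
    exact_mod_cast le_sup' β (mem_compl.mpr i.2)
  have hlow : ((Sᶜ.inf' hF β : ℕ) : ℝ) ≤ lam :=
    hsym.le_iInf_eigenvalues_of_le_sum_row (fun _ _ => groundedLaplacian_nonpos_of_ne G S)
      fun i => by
        rw [sum_groundedLaplacian_row]
        exact_mod_cast inf'_le β (mem_compl.mpr i.2)
  constructor
  · intro h
    have hlt : 1 / γ < lam := by rwa [div_lt_iff₀ hγ, ← div_lt_iff₀' hpos]
    exact_mod_cast (Nat.floor_le (by positivity)).trans_lt (hlt.trans_le hup)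
  · intro h
    have hlt : 1 / γ < lam := (Nat.le_ceil _).trans_lt ((Nat.cast_lt.mpr h).trans_le hlow)
    rwa [div_lt_iff₀ hpos, ← div_lt_iff₀' hγ]

/-- let `1/λ₁(L_g)` be the `H∞` norm of the velocity tracking dynamics.
(i) Necessity: if `1/λ₁(L_g) < γ` then `max_{i∈F} β_i > ⌊1/γ⌋`.
(ii) Sufficiency: if `min_{i∈F} β_i > ⌈1/γ⌉` then `1/λ₁(L_g) < γ`. -/
theorem hinf_norm_velocity_tracking_conditions {V : Type*} [Fintype V] [DecidableEq V]
    (G : SimpleGraph V) [DecidableRel G.Adj] (hconn : G.Connected)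
    (S : Finset V) (hS : S.Nonempty) (hF : Sᶜ.Nonempty)
    (hsym : (groundedLaplacian G S).IsHermitian)
    (hpos : 0 < ⨅ j, hsym.eigenvalues j) (γ : ℝ) (hγ : 0 < γ) :
    (1 / (⨅ j, hsym.eigenvalues j) < γ →
      Sᶜ.sup' hF (fun i => (G.neighborFinset i ∩ S).card) > ⌊1/γ⌋₊) ∧
    (Sᶜ.inf' hF (fun i => (G.neighborFinset i ∩ S).card) > ⌈1/γ⌉₊ →
      1 / (⨅ j, hsym.eigenvalues j) < γ) :=
  hinf_norm_velocity_tracking_conditions_general G S hF hsym hpos γ hγ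
end

section
/- Let n, k ≥ 1, consider the k-nearest neighbor platoon P(n,k), let S ⊆ {1,…,n} be a nonempty set of reference vehicles with F = {1,…,n} \ S nonempty, let L_g be the grounded Laplacian, and let B = I_{|F|} ⊗ B1 + L_g ⊗ B2 with B1 = [[0,1],[0,0]] and B2 = [[0,0],[−1,−1]]. Then the spectral radius of B is at most 4k: every complex eigenvalue μ of B satisfies |μ| ≤ 4k. Consequently, for any delay τ with 0 ≤ τ < 1/(4k), one has τ·|μ| < 1 for every eigenvalue μ of B. -/
open scoped Kronecker Matrix

/-- The `k`-nearest neighbor platoon `P(n,k)`: the graph on `{1,…,n}` (modeled as `Fin n`)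
in which distinct vertices `i, j` are adjacent iff `|i − j| ≤ k`. -/
def platoon (n k : ℕ) : SimpleGraph (Fin n) where
  Adj i j := i ≠ j ∧ ((i : ℤ) - (j : ℤ)).natAbs ≤ k
  symm := ⟨by
    intro i j h
    exact ⟨h.1.symm, by omega⟩⟩
  loopless := ⟨fun i h => h.1 rfl⟩

instance (n k : ℕ) : DecidableRel (platoon n k).Adj :=
  fun i j => inferInstanceAs (Decidable (i ≠ j ∧ ((i : ℤ) - (j : ℤ)).natAbs ≤ k))

/-- The network formation dynamics matrix `B = I ⊗ B₁ + L_g ⊗ B₂` with unit control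
gains, where `B₁ = [[0,1],[0,0]]` and `B₂ = [[0,0],[−1,−1]]`. -/
noncomputable def formationMatrix {F : Type*} [Fintype F] [DecidableEq F]
    (Lg : Matrix F F ℝ) : Matrix (F × Fin 2) (F × Fin 2) ℝ :=
  (1 : Matrix F F ℝ) ⊗ₖ !![0, 1; 0, 0] + Lg ⊗ₖ !![0, 0; -1, -1]

/-!
The eigenproblem of `B = I ⊗ B₁ + L_g ⊗ B₂` decouples along the eigenvectors of `L_g`: every
eigenvalue `μ` of `B` solves `μ² + ν μ + ν = 0` for an eigenvalue `ν` of `L_g`. The grounded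
Laplacian is symmetric, so `ν` is real, and by Gershgorin's theorem (its diagonal entries are the
degrees, at most `2k`, and dominate the off-diagonal row sums) `0 ≤ ν ≤ 4k`. A root of
`x² + ν x + ν` is either real, hence in `[-ν, 0]`, or of modulus `√ν`; in both cases `|μ| ≤ 4k`.
-/

theorem Matrix.mem_spectrum_iff_exists_mulVec_eq_smul {K ι : Type*} [Field K] [Fintype ι]
    [DecidableEq ι] {A : Matrix ι ι K} {μ : K} :
    μ ∈ spectrum K A ↔ ∃ v ≠ 0, A *ᵥ v = μ • v := by
  simp only [← Matrix.spectrum_toLin', ← Module.End.hasEigenvalue_iff_mem_spectrum,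
    Module.End.hasEigenvalue_iff, Submodule.ne_bot_iff, Module.End.mem_eigenspace_iff,
    Matrix.toLin'_apply]
  aesop

theorem Matrix.IsSymm.exists_real_mem_Icc_of_mem_spectrum_map_ofReal {ι : Type*} [Fintype ι]
    [DecidableEq ι] {A : Matrix ι ι ℝ} (hA : A.IsSymm)
    (hdom : ∀ i, ∑ j ∈ Finset.univ.erase i, |A i j| ≤ A i i) {d : ℝ} (hd : ∀ i, A i i ≤ d)
    {ν : ℂ} (hν : ν ∈ spectrum ℂ (A.map Complex.ofReal)) :
    ∃ r : ℝ, ν = r ∧ 0 ≤ r ∧ r ≤ 2 * d := by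
  have hherm : (A.map Complex.ofReal).IsHermitian :=
    (isHermitian_iff_isSymm.mpr hA).map _ fun _ => (Complex.conj_ofReal _).symm
  obtain ⟨r, -, rfl⟩ : ∃ r ∈ Set.range hherm.eigenvalues, (r : ℂ) = ν := by
    simpa [hherm.spectrum_eq_image_range] using hν
  obtain ⟨i, hi⟩ := eigenvalue_mem_ball (Module.End.hasEigenvalue_iff_mem_spectrum.mpr
    ((A.map Complex.ofReal).spectrum_toLin' ▸ hν))
  have hball : |r - A i i| ≤ A i i := by
    rw [Metric.mem_closedBall, Complex.dist_eq] at hi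
    simp only [Matrix.map_apply, Complex.norm_real, Real.norm_eq_abs] at hi
    exact_mod_cast hi.trans (hdom i)
  exact ⟨r, rfl, by linarith [abs_le.mp hball], by linarith [abs_le.mp hball, hd i]⟩

theorem Complex.norm_le_of_sq_add_mul_add_eq_zero {r c : ℝ} {μ : ℂ} (hc : 1 ≤ c) (hr : 0 ≤ r)
    (hrc : r ≤ c) (h : μ ^ 2 + r * μ + r = 0) : ‖μ‖ ≤ c := by
  have hre : μ.re ^ 2 - μ.im ^ 2 + r * μ.re + r = 0 := by
    simpa [pow_two] using congrArg Complex.re h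
  have him : μ.im * (2 * μ.re + r) = 0 := by
    linear_combination (by simpa [pow_two] using congrArg Complex.im h : _ = _)
  suffices μ.re ^ 2 + μ.im ^ 2 ≤ c ^ 2 by
    rw [← pow_le_pow_iff_left₀ (norm_nonneg μ) (by linarith) two_ne_zero, Complex.sq_norm,
      Complex.normSq_apply]
    nlinarith
  rcases mul_eq_zero.mp him with him | hre'
  · -- a real root of `x² + r x + r` satisfies `μ (μ + r) = -r ≤ 0`, so it lies in `[-r, 0]`
    have hprod : μ.re * (μ.re + r) ≤ 0 := by rw [him] at hre; nlinarith
    have hlo : -r ≤ μ.re := by nlinarith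
    have hhi : μ.re ≤ 0 := by nlinarith
    rw [him]
    nlinarith
  · -- complex conjugate roots have `|μ|² = r`
    nlinarith

section Graph

variable {V : Type*} [Fintype V] [DecidableEq V] (G : SimpleGraph V) [DecidableRel G.Adj]

theorem SimpleGraph.lapMatrix_apply_self (i : V) : G.lapMatrix ℝ i i = G.degree i := by
  simp [SimpleGraph.lapMatrix, SimpleGraph.degMatrix]

theorem SimpleGraph.sum_abs_lapMatrix_erase (i : V) :
    ∑ j ∈ Finset.univ.erase i, |G.lapMatrix ℝ i j| = G.degree i := by
  rw [G.degree_eq_sum_if_adj, ← Finset.sum_erase Finset.univ (a := i) (by simp)]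
  refine Finset.sum_congr rfl fun j hj => ?_
  have hij : i ≠ j := (Finset.ne_of_mem_erase hj).symm
  by_cases hadj : G.Adj i j <;> simp [SimpleGraph.lapMatrix, SimpleGraph.degMatrix, hij, hadj]

variable (S : Finset V)

theorem groundedLaplacian_isSymm : (groundedLaplacian G S).IsSymm :=
  (G.isSymm_lapMatrix ℝ).submatrix _

theorem groundedLaplacian_apply_self (i : {v // v ∉ S}) :
    groundedLaplacian G S i i = G.degree i :=
  G.lapMatrix_apply_self i

theorem sum_abs_groundedLaplacian_erase_le (i : {v // v ∉ S}) :
    ∑ j ∈ Finset.univ.erase i, |groundedLaplacian G S i j| ≤ groundedLaplacian G S i i := by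
  rw [groundedLaplacian_apply_self, ← G.sum_abs_lapMatrix_erase]
  calc ∑ j ∈ Finset.univ.erase i, |groundedLaplacian G S i j|
      = ∑ j ∈ (Finset.univ.erase i).map (Function.Embedding.subtype _), |G.lapMatrix ℝ i j| := by
        rw [Finset.sum_map]; rfl
    _ ≤ ∑ j ∈ Finset.univ.erase (i : V), |G.lapMatrix ℝ i j| :=
        Finset.sum_le_sum_of_subset_of_nonneg
          (by rw [Finset.map_erase]; exact Finset.erase_subset_erase _ (Finset.subset_univ _))
          fun _ _ _ => abs_nonneg _

end Graph

theorem platoon_degree_le (n k : ℕ) (i : Fin n) : (platoon n k).degree i ≤ 2 * k := by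
  have hsub : ((platoon n k).neighborFinset i).map Fin.valEmbedding ⊆
      (Finset.Icc (i - k : ℕ) (i + k)).erase i := by
    intro j hj
    simp only [Finset.mem_map, SimpleGraph.mem_neighborFinset, Fin.valEmbedding_apply] at hj
    obtain ⟨j, ⟨hne, hdist⟩, rfl⟩ := hj
    have : (i : ℕ) ≠ j := Fin.val_ne_of_ne hne
    simp only [Finset.mem_erase, Finset.mem_Icc]
    omega
  calc (platoon n k).degree i = (((platoon n k).neighborFinset i).map Fin.valEmbedding).card := by
        rw [Finset.card_map, SimpleGraph.card_neighborFinset_eq_degree]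
    _ ≤ ((Finset.Icc (i - k : ℕ) (i + k)).erase i).card := Finset.card_le_card hsub
    _ ≤ 2 * k := by
        rw [Finset.card_erase_of_mem (by simp), Nat.card_Icc]
        omega

section Formation

variable {F : Type*} [Fintype F] [DecidableEq F] (L : Matrix F F ℝ)

theorem formationMatrix_mulVec_apply_zero (v : F × Fin 2 → ℂ) (i : F) :
    ((formationMatrix L).map Complex.ofReal *ᵥ v) (i, 0) = v (i, 1) := by
  simp [formationMatrix, Matrix.mulVec, dotProduct, Fintype.sum_prod_type, Matrix.one_apply,
    apply_ite]

theorem formationMatrix_mulVec_apply_one (v : F × Fin 2 → ℂ) (i : F) :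
    ((formationMatrix L).map Complex.ofReal *ᵥ v) (i, 1) =
      -(L.map Complex.ofReal *ᵥ fun j => v (j, 0) + v (j, 1)) i := by
  simp [formationMatrix, Matrix.mulVec, dotProduct, Fintype.sum_prod_type, mul_add,
    ← Finset.sum_neg_distrib, add_comm]

/-- An eigenvector `v = (x, y)` of `B` satisfies `y = μ x` and `-(1 + μ) L x = μ² x`, so `x` is an
eigenvector of `L` for `ν = -μ² / (1 + μ)`; `μ = -1` is impossible since it forces `x = 0`. -/
theorem exists_mem_spectrum_of_mem_spectrum_formationMatrix {μ : ℂ}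
    (hμ : μ ∈ spectrum ℂ ((formationMatrix L).map Complex.ofReal)) :
    ∃ ν ∈ spectrum ℂ (L.map Complex.ofReal), μ ^ 2 + ν * μ + ν = 0 := by
  obtain ⟨v, hv, hBv⟩ := Matrix.mem_spectrum_iff_exists_mulVec_eq_smul.mp hμ
  set x : F → ℂ := fun i => v (i, 0)
  have hy : ∀ i, v (i, 1) = μ * x i := fun i => by
    simpa [formationMatrix_mulVec_apply_zero] using congrFun hBv (i, 0)
  have hLx : ∀ i, -(1 + μ) * (L.map Complex.ofReal *ᵥ x) i = μ ^ 2 * x i := fun i => by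
    have hsum : (fun j => v (j, 0) + v (j, 1)) = (1 + μ) • x := funext fun j => by
      simp only [hy, Pi.smul_apply, smul_eq_mul, x]
      ring
    have := congrFun hBv (i, 1)
    rw [formationMatrix_mulVec_apply_one, hsum, Matrix.mulVec_smul] at this
    simp only [Pi.smul_apply, smul_eq_mul, hy] at this
    linear_combination this
  have hx : x ≠ 0 := by
    rintro hx
    refine hv (funext fun ⟨i, a⟩ => ?_)
    fin_cases a
    · exact congrFun hx i
    · simp [hy, show x i = 0 from congrFun hx i]
  have hμ1 : 1 + μ ≠ 0 := by
    intro h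
    obtain rfl : μ = -1 := by linear_combination h
    refine hx (funext fun i => ?_)
    simpa [h] using (hLx i).symm
  refine ⟨-μ ^ 2 / (1 + μ), Matrix.mem_spectrum_iff_exists_mulVec_eq_smul.mpr ⟨x, hx, ?_⟩, ?_⟩
  · funext i
    rw [Pi.smul_apply, smul_eq_mul, div_mul_eq_mul_div, eq_div_iff hμ1]
    linear_combination -(hLx i)
  · field_simp
    ring

end Formation

theorem platoon_formation_spectral_radius_general (n k : ℕ) (hk : 1 ≤ k)
    (S : Finset (Fin n)) :
    (∀ μ ∈ spectrum ℂ
        ((formationMatrix (groundedLaplacian (platoon n k) S)).map Complex.ofReal),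
      ‖μ‖ ≤ 4 * k) ∧
    (∀ τ : ℝ, 0 ≤ τ → τ < 1 / (4 * k) →
      ∀ μ ∈ spectrum ℂ
          ((formationMatrix (groundedLaplacian (platoon n k) S)).map Complex.ofReal),
        τ * ‖μ‖ < 1) := by
  have hk' : (1 : ℝ) ≤ k := by exact_mod_cast hk
  have hspec : ∀ μ ∈ spectrum ℂ
      ((formationMatrix (groundedLaplacian (platoon n k) S)).map Complex.ofReal),
      ‖μ‖ ≤ 4 * k := by
    intro μ hμ
    obtain ⟨ν, hν, hμν⟩ := exists_mem_spectrum_of_mem_spectrum_formationMatrix _ hμ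
    have hdiag (i : {v // v ∉ S}) : groundedLaplacian (platoon n k) S i i ≤ 2 * k := by
      rw [groundedLaplacian_apply_self]
      exact_mod_cast platoon_degree_le n k i
    obtain ⟨r, rfl, hr0, hr⟩ :=
      (groundedLaplacian_isSymm _ S).exists_real_mem_Icc_of_mem_spectrum_map_ofReal
        (sum_abs_groundedLaplacian_erase_le _ S) hdiag hν
    exact Complex.norm_le_of_sq_add_mul_add_eq_zero (by linarith) hr0 (by linarith) hμν
  refine ⟨hspec, fun τ hτ0 hτ μ hμ => ?_⟩
  rw [lt_div_iff₀ (by positivity)] at hτ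
  calc τ * ‖μ‖ ≤ τ * (4 * k) := mul_le_mul_of_nonneg_left (hspec μ hμ) hτ0
    _ < 1 := hτ

/-- for the platoon `P(n,k)` with grounded Laplacian `L_g` and network
formation matrix `B`, every complex eigenvalue `μ` of `B` satisfies `|μ| ≤ 4k` (the spectral
radius of `B` is at most `4k`); consequently, for every delay `0 ≤ τ < 1/(4k)` one has
`τ·|μ| < 1` for every eigenvalue `μ` of `B`. -/
theorem platoon_formation_spectral_radius (n k : ℕ) (hn : 1 ≤ n) (hk : 1 ≤ k)
    (S : Finset (Fin n)) (hS : S.Nonempty) (hF : Sᶜ.Nonempty) :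
    (∀ μ ∈ spectrum ℂ
        ((formationMatrix (groundedLaplacian (platoon n k) S)).map Complex.ofReal),
      ‖μ‖ ≤ 4 * k) ∧
    (∀ τ : ℝ, 0 ≤ τ → τ < 1 / (4 * k) →
      ∀ μ ∈ spectrum ℂ
          ((formationMatrix (groundedLaplacian (platoon n k) S)).map Complex.ofReal),
        τ * ‖μ‖ < 1) :=
  platoon_formation_spectral_radius_general n k hk S
end
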